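/- Let n ≥ 1 and let f₁,…,fₙ, g₁,…,gₙ be homogeneous polynomials of degree 2 and N a homogeneous polynomial of degree 3 in ℂ[x₁,…,xₙ] with gᵢ(f₁,…,fₙ) = N·xᵢ for all i. Then for every i, the polynomial N + xᵢ·(∂N/∂xᵢ) belongs to the ideal I = (f₁,…,fₙ). -/

import Mathlib

/-!
Differentiate `gᵢ(f₁,…,fₙ) = N·xᵢ` with respect to `xᵢ`. By the chain rule,
`N + xᵢ·∂N/∂xᵢ = ∑ₖ (∂gᵢ/∂yₖ)(f₁,…,fₙ) · ∂fₖ/∂xᵢ`, and each `∂gᵢ/∂yₖ` is a linear form,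
so substituting `f` into it gives an element of `(f₁,…,fₙ)`.
-/

open MvPolynomial

namespace MvPolynomial

variable {R σ τ : Type*} [CommSemiring R]

theorem pderiv_bind₁ [Fintype σ] (f : σ → MvPolynomial τ R) (i : τ) (p : MvPolynomial σ R) :
    pderiv i (bind₁ f p) = ∑ k, bind₁ f (pderiv k p) * pderiv i (f k) := by
  classical
  induction p using MvPolynomial.induction_on with
  | C a => simp
  | add p q hp hq => simp [hp, hq, add_mul, Finset.sum_add_distrib]
  | mul_X p j hp =>
    simp [hp, pderiv_X, Pi.single_apply, add_mul, Finset.sum_add_distrib, apply_ite (bind₁ f),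
      Finset.mul_sum, mul_assoc]

theorem IsHomogeneous.mem_idealOfVars {p : MvPolynomial σ R} {m : ℕ} (hp : p.IsHomogeneous m)
    (hm : m ≠ 0) : p ∈ idealOfVars σ R := by
  rw [← pow_one (idealOfVars σ R), mem_pow_idealOfVars_iff']
  exact fun _ hd => hp.coeff_eq_zero (by omega)

theorem bind₁_mem_span_range_of_mem_idealOfVars (f : σ → MvPolynomial τ R)
    {p : MvPolynomial σ R} (hp : p ∈ idealOfVars σ R) :
    bind₁ f p ∈ Ideal.span (Set.range f) := by
  simpa only [idealOfVars, Ideal.map_span, ← Set.range_comp, Function.comp_def, bind₁_X_right]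
    using Ideal.mem_map_of_mem (bind₁ f) hp

end MvPolynomial

theorem stmt2_general (n : ℕ)
    (f g : Fin n → MvPolynomial (Fin n) ℂ)
    (N : MvPolynomial (Fin n) ℂ)
    (hg : ∀ i, (g i).IsHomogeneous 2)
    (hgf : ∀ i, bind₁ f (g i) = N * X i) :
    ∀ i : Fin n,
      N + X i * pderiv i N ∈ Ideal.span (Set.range f) := by
  intro i
  have chain_rule : N + X i * pderiv i N = ∑ k, bind₁ f (pderiv k (g i)) * pderiv i (f k) := by
    rw [← pderiv_bind₁, hgf i, pderiv_mul, pderiv_X_self]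
    ring
  rw [chain_rule]
  refine Ideal.sum_mem _ fun k _ => Ideal.mul_mem_right _ _ ?_
  exact bind₁_mem_span_range_of_mem_idealOfVars f ((hg i).pderiv.mem_idealOfVars one_ne_zero)

/-- For a quadro-quadric Cremona transformation with lift `F = (f₁,…,fₙ)` and cubic
form `N`, one has `N + xᵢ · ∂N/∂xᵢ ∈ (f₁,…,fₙ)` for every `i`. -/
theorem stmt2 (n : ℕ) (hn : 1 ≤ n)
    (f g : Fin n → MvPolynomial (Fin n) ℂ)
    (N : MvPolynomial (Fin n) ℂ)
    (hf : ∀ i, (f i).IsHomogeneous 2) (hg : ∀ i, (g i).IsHomogeneous 2)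
    (hN : N.IsHomogeneous 3)
    (hgf : ∀ i, bind₁ f (g i) = N * X i) :
    ∀ i : Fin n,
      N + X i * pderiv i N ∈ Ideal.span (Set.range f) :=
  stmt2_general n f g N hg hgf
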